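/- Let D be a Borel probability distribution on ℝ_{≥0}^k with BRev(D) > 0, let c > 0, ε > 0, a ∈ {0,1}, and let M = (q,p) be an incentive-compatible, individually rational mechanism with p measurable such that for every v in the support of D with p(v) > 0 there exists j ∈ ℕ_{≥1} with p(v) ∈ I_j := [c·2^{2(j−1)+a}, c·2^{2(j−1)+a+1}), and such that p(v) = 0 for v outside these sets. For j ∈ ℕ_{≥1} let B_j := {v ∈ supp(D) : p(v) ∈ I_j}, let J := {j : B_j ≠ ∅}, and for each j ∈ J choose x_j ∈ B_j with ‖x_j‖₁ ≤ (1+ε)·‖v‖₁ for all v ∈ B_j, and set q_j := q(x_j). Let X be the sequence (x_j)_{j∈J} and Q the sequence (q_j)_{j∈J} (prepended by q_0 = 0), both ordered by increasing j. Then 4·(1+ε)·BRev(D)·MenuGap(X,Q) ≥ Rev(D,M). -/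

import Mathlib

/-!
Write `L_j = c·2^{2(j-1)+a}` for the floor of `I_j`, so that `p < 2 L_j` on `B_j` and
`4 L_{j'} ≤ L_j` for `j' < j`. Incentive compatibility gives
`(q_j - q_{j'})·x_j ≥ p(x_j) - p(x_{j'}) ≥ L_j - 2 L_{j'} ≥ L_j / 2`, and individual rationality
gives `q_j·x_j ≥ p(x_j) ≥ L_j`, so `gap_j ≥ L_j / 2`. On the other hand every `v ∈ B_j` has
`∑ v ≥ ‖x_j‖₁ / (1+ε)`, so selling the grand bundle at that price shows
`‖x_j‖₁ μ(B_j) ≤ (1+ε) BRev`; hence the revenue from `B_j` is at most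
`2 L_j μ(B_j) ≤ 4 (1+ε) BRev · (L_j / 2) / ‖x_j‖₁`. Summing over `j` gives the bound.
-/

open scoped BigOperators ENNReal NNReal
open Filter MeasureTheory

noncomputable section

namespace Stmt7

/-- Valuation / allocation vectors over `k` items. -/
abbrev V (k : ℕ) := Fin k → ℝ

/-- Dot product. -/
def dot {k : ℕ} (x y : V k) : ℝ := ∑ t, x t * y t

/-- ℓ¹ norm. -/
def norm1 {k : ℕ} (x : V k) : ℝ := ∑ t, |x t|

/-- Sum of a (possibly divergent) series, as limsup of partial sums in `EReal`. -/
def eseries (f : ℕ → ℝ) : EReal :=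
  Filter.limsup (fun n => ((∑ i ∈ Finset.range n, f i : ℝ) : EReal)) Filter.atTop

/-- `gap_i^{X,Q} := min_{0 ≤ j < i} (q_i - q_j)·x_i`, the minimum ranging over the
indices of `S` before `i` together with the index `0` (where `Q 0 = 0`). -/
def gapS {k : ℕ} (S : Set ℕ) (X Q : ℕ → V k) (i : ℕ) : ℝ :=
  sInf {y | ∃ j : ℕ, (j ∈ S ∨ j = 0) ∧ j < i ∧ y = dot (Q i - Q j) (X i)}

/-- `MenuGap(X,Q) := ∑_i gap_i^{X,Q}/‖x_i‖₁`, summing over indices in `S` in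
increasing order. -/
def menuGapS {k : ℕ} (S : Set ℕ) (X Q : ℕ → V k) : EReal :=
  eseries (S.indicator fun i => gapS S X Q i / norm1 (X i))

/-- `BRev(D) := sup_{t > 0} t · Pr_{v ∼ D}[∑ i, v i ≥ t]`. -/
def brev {k : ℕ} (μ : Measure (V k)) : ℝ≥0∞ :=
  ⨆ t : ℝ, ⨆ (_ : (0:ℝ) < t), ENNReal.ofReal t * μ {v | t ≤ ∑ i, v i}

/-- Topological support of a measure. -/
def msupport {k : ℕ} (μ : Measure (V k)) : Set (V k) :=
  {x | ∀ U : Set (V k), IsOpen U → x ∈ U → 0 < μ U}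

/-- The dyadic price interval `I_j = [c·2^{2(j-1)+a}, c·2^{2(j-1)+a+1})`. -/
def Ico' (c : ℝ) (a j : ℕ) : Set ℝ :=
  Set.Ico (c * 2 ^ (2*(j-1)+a)) (c * 2 ^ (2*(j-1)+a+1))

/-- `B_j := {v ∈ supp(D) : p(v) ∈ I_j}`. -/
def Bset {k : ℕ} (μ : Measure (V k)) (p : V k → ℝ) (c : ℝ) (a j : ℕ) : Set (V k) :=
  {v | v ∈ msupport μ ∧ p v ∈ Ico' c a j}

section Vectors

variable {k : ℕ}

lemma dot_comm (x y : V k) : dot x y = dot y x := by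
  simp only [dot, mul_comm]

lemma dot_sub_left (x y v : V k) : dot (x - y) v = dot x v - dot y v := by
  simp only [dot, Pi.sub_apply, sub_mul, Finset.sum_sub_distrib]

lemma norm1_eq_sum {v : V k} (hv : ∀ t, 0 ≤ v t) : norm1 v = ∑ t, v t :=
  Finset.sum_congr rfl fun t _ => abs_of_nonneg (hv t)

lemma dot_le_norm1 {w v : V k} (hw : ∀ t, w t ≤ 1) (hv : ∀ t, 0 ≤ v t) : dot w v ≤ norm1 v := by
  rw [norm1_eq_sum hv]
  exact Finset.sum_le_sum fun t _ => mul_le_of_le_one_left (hv t) (hw t)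

end Vectors

lemma msupport_eq_support {k : ℕ} (μ : Measure (V k)) : msupport μ = μ.support := by
  ext x
  simp only [msupport, Measure.support_eq_forall_isOpen, Set.mem_ofPred_eq]
  exact forall_congr' fun U => ⟨fun h hx hU => h hU hx, fun h hU hx => h hx hU⟩

section Series

lemma eseries_eq_tsum {f : ℕ → ℝ} (hf : Summable f) : eseries f = ((∑' i, f i : ℝ) : EReal) :=
  ((EReal.tendsto_coe).2 hf.hasSum.tendsto_sum_nat).limsup_eq

lemma eseries_eq_top {f : ℕ → ℝ} (hf : ∀ n, 0 ≤ f n) (hs : ¬Summable f) : eseries f = ⊤ := by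
  refine Tendsto.limsup_eq (EReal.tendsto_nhds_top_iff_real.2 fun y => ?_)
  filter_upwards [((not_summable_iff_tendsto_nat_atTop_of_nonneg hf).1 hs).eventually_gt_atTop y]
    with n hn
  exact EReal.coe_lt_coe_iff.2 hn

lemma le_eseries {f : ℕ → ℝ} (hf : ∀ n, 0 ≤ f n) (j : ℕ) : (f j : EReal) ≤ eseries f := by
  refine le_limsup_of_frequently_le' (Eventually.frequently ?_)
  filter_upwards [eventually_gt_atTop j] with n hn
  exact EReal.coe_le_coe_iff.2 (Finset.single_le_sum (fun i _ => hf i) (Finset.mem_range.2 hn))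

lemma coe_le_mul_eseries {F g : ℕ → ℝ} {R K : ℝ} (hF : HasSum F R) (hK : 0 < K)
    (hg : ∀ j, 0 ≤ g j) (hFg : ∀ j, F j ≤ K * g j) : (R : EReal) ≤ K * eseries g := by
  by_cases hs : Summable g
  · rw [eseries_eq_tsum hs, ← EReal.coe_mul, ← tsum_mul_left]
    exact EReal.coe_le_coe_iff.2 (hasSum_le hFg hF (hs.mul_left K).hasSum)
  · rw [eseries_eq_top hg hs, EReal.coe_mul_top_of_pos hK]
    exact le_top

lemma coe_le_top_mul_eseries {F g : ℕ → ℝ} {R : ℝ} (hF : HasSum F R)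
    (hg : ∀ j, 0 ≤ g j) (hFg : ∀ j, g j = 0 → F j ≤ 0) : (R : EReal) ≤ ⊤ * eseries g := by
  by_cases hpos : ∃ j, 0 < g j
  · obtain ⟨j, hj⟩ := hpos
    rw [EReal.top_mul_of_pos ((EReal.coe_pos.2 hj).trans_le (le_eseries hg j))]
    exact le_top
  · push Not at hpos
    have hR : R ≤ 0 :=
      hasSum_le (fun j => hFg j ((hpos j).antisymm (hg j))) hF hasSum_zero
    exact (EReal.coe_nonpos.2 hR).trans
      (EReal.mul_nonneg le_top ((EReal.coe_nonneg.2 (hg 0)).trans (le_eseries hg 0)))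

end Series

section BundleRevenue

variable {k : ℕ} {μ : Measure (V k)}

lemma ofReal_mul_measure_le_brev {s : Set (V k)} {t : ℝ} (ht : 0 < t)
    (hs : ∀ v ∈ s, t ≤ ∑ i, v i) : ENNReal.ofReal t * μ s ≤ brev μ :=
  le_iSup₂_of_le t ht (by gcongr; exact hs)

lemma setIntegral_le_div_mul_brev [IsFiniteMeasure μ] {p : V k → ℝ} {s : Set (V k)}
    (hs : MeasurableSet s) (hp : IntegrableOn p s μ) {P t : ℝ} (hP : 0 ≤ P) (ht : 0 < t)
    (hpP : ∀ v ∈ s, p v ≤ P) (hts : ∀ v ∈ s, t ≤ ∑ i, v i) (hb : brev μ ≠ ⊤) :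
    ∫ v in s, p v ∂μ ≤ P / t * (brev μ).toReal := by
  have hmass : t * μ.real s ≤ (brev μ).toReal := by
    have := ENNReal.toReal_mono hb (ofReal_mul_measure_le_brev (μ := μ) ht hts)
    rwa [ENNReal.toReal_mul, ENNReal.toReal_ofReal ht.le] at this
  calc ∫ v in s, p v ∂μ ≤ ∫ _ in s, P ∂μ :=
        setIntegral_mono_on hp (integrableOn_const (measure_ne_top μ s)) hs hpP
    _ = P / t * (t * μ.real s) := by
        rw [setIntegral_const, smul_eq_mul]
        field_simp
    _ ≤ P / t * (brev μ).toReal := mul_le_mul_of_nonneg_left hmass (by positivity)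

end BundleRevenue

section PriceLevels

def levelFloor (c : ℝ) (a j : ℕ) : ℝ := c * 2 ^ (2 * (j - 1) + a)

lemma Ico'_eq (c : ℝ) (a j : ℕ) :
    Ico' c a j = Set.Ico (levelFloor c a j) (2 * levelFloor c a j) := by
  rw [Ico', levelFloor, pow_succ]
  ring_nf

lemma levelFloor_nonneg {c : ℝ} (hc : 0 ≤ c) (a j : ℕ) : 0 ≤ levelFloor c a j := by
  unfold levelFloor; positivity

lemma levelFloor_pos {c : ℝ} (hc : 0 < c) (a j : ℕ) : 0 < levelFloor c a j := by
  unfold levelFloor; positivity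

lemma levelFloor_le_norm1 {k : ℕ} {v w : V k} {P c : ℝ} {a j : ℕ} (hv : ∀ t, 0 ≤ v t)
    (hw : ∀ t, w t ≤ 1) (hpay : 0 ≤ dot v w - P) (hP : P ∈ Ico' c a j) :
    levelFloor c a j ≤ norm1 v := by
  rw [Ico'_eq] at hP
  linarith [hP.1, dot_comm v w ▸ dot_le_norm1 hw hv]

lemma four_mul_levelFloor_le {c : ℝ} (hc : 0 ≤ c) (a : ℕ) {i j : ℕ} (hi : 1 ≤ i) (hij : i < j) :
    4 * levelFloor c a i ≤ levelFloor c a j := by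
  have hexp : 2 * (i - 1) + a + 2 ≤ 2 * (j - 1) + a := by omega
  calc 4 * levelFloor c a i = c * 2 ^ (2 * (i - 1) + a + 2) := by rw [levelFloor, pow_add]; ring
    _ ≤ levelFloor c a j := mul_le_mul_of_nonneg_left (pow_le_pow_right₀ one_le_two hexp) hc

lemma disjoint_Ico' {c : ℝ} (hc : 0 ≤ c) (a : ℕ) {i j : ℕ} (hi : 1 ≤ i) (hij : i < j) :
    Disjoint (Ico' c a i) (Ico' c a j) := by
  rw [Ico'_eq, Ico'_eq, Set.Ico_disjoint_Ico]
  have := four_mul_levelFloor_le hc a hi hij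
  have := levelFloor_nonneg hc a i
  exact (min_le_left _ _).trans ((le_max_right _ _).trans' (by linarith))

/-- `B_j`, made empty at `j = 0`, where truncated subtraction gives `Ico' c a 0 = Ico' c a 1`. -/
def priceLevel {k : ℕ} (μ : Measure (V k)) (p : V k → ℝ) (c : ℝ) (a j : ℕ) : Set (V k) :=
  {v | 1 ≤ j ∧ v ∈ Bset μ p c a j}

variable {k : ℕ} {μ : Measure (V k)} {p : V k → ℝ} {c : ℝ} {a : ℕ}

lemma measurableSet_priceLevel (hp : Measurable p) (j : ℕ) :
    MeasurableSet (priceLevel μ p c a j) := by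
  have hB : MeasurableSet (Bset μ p c a j) := by
    rw [Bset, msupport_eq_support]
    exact Measure.isClosed_support.measurableSet.inter (hp measurableSet_Ico)
  exact (MeasurableSet.const (1 ≤ j)).inter hB

lemma pairwise_disjoint_priceLevel (hc : 0 ≤ c) :
    Pairwise (Function.onFun Disjoint (priceLevel μ p c a)) :=
  (pairwise_disjoint_on _).2 fun _ _ hij => Set.disjoint_left.2 fun _ hi hj =>
    Set.disjoint_left.1 (disjoint_Ico' hc a hi.1 hij) hi.2.2 hj.2.2

lemma hasSum_integral_priceLevel (hc : 0 ≤ c) (hpm : Measurable p) (hpi : Integrable p μ)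
    (hdyadic : ∀ v ∈ msupport μ, p v = 0 ∨ ∃ j : ℕ, 1 ≤ j ∧ p v ∈ Ico' c a j) :
    HasSum (fun j => ∫ v in priceLevel μ p c a j, p v ∂μ) (∫ v, p v ∂μ) := by
  have hcover : ∀ᵐ v ∂μ, v ∉ ⋃ j, priceLevel μ p c a j → p v = 0 := by
    filter_upwards [msupport_eq_support μ ▸ Measure.support_mem_ae] with v hv hnot
    refine (hdyadic v hv).resolve_right ?_
    rintro ⟨j, hj, hpj⟩
    exact hnot (Set.mem_iUnion.2 ⟨j, hj, hv, hpj⟩)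
  rw [← setIntegral_eq_integral_of_ae_compl_eq_zero hcover]
  exact hasSum_integral_iUnion (measurableSet_priceLevel hpm)
    (pairwise_disjoint_priceLevel hc) hpi.integrableOn

lemma integral_priceLevel_eq_zero {j : ℕ} (hj : ¬(1 ≤ j ∧ (Bset μ p c a j).Nonempty)) :
    ∫ v in priceLevel μ p c a j, p v ∂μ = 0 := by
  have hempty : priceLevel μ p c a j = ∅ :=
    Set.eq_empty_of_forall_notMem fun v hv => hj ⟨hv.1, v, hv.2⟩
  rw [hempty, Measure.restrict_empty, integral_zero_measure]

lemma integral_priceLevel_le [IsFiniteMeasure μ] (hsupp : msupport μ ⊆ {v | ∀ t, 0 ≤ v t})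
    (hc : 0 ≤ c) {ε : ℝ} (hε : 0 < 1 + ε) (hpm : Measurable p) (hpi : Integrable p μ) {j : ℕ}
    {xj : V k} (hxj : 0 < norm1 xj) (hmin : ∀ v ∈ Bset μ p c a j, norm1 xj ≤ (1 + ε) * norm1 v)
    (hb : brev μ ≠ ⊤) :
    ∫ v in priceLevel μ p c a j, p v ∂μ ≤
      4 * (1 + ε) * (brev μ).toReal * (levelFloor c a j / 2 / norm1 xj) := by
  have hfloor := levelFloor_nonneg hc a j
  have hprice : ∀ v ∈ priceLevel μ p c a j, p v ≤ 2 * levelFloor c a j := fun v hv =>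
    ((Ico'_eq c a j ▸ hv.2.2).2).le
  have hbundle : ∀ v ∈ priceLevel μ p c a j, norm1 xj / (1 + ε) ≤ ∑ i, v i := fun v hv => by
    rw [div_le_iff₀ hε, ← norm1_eq_sum (hsupp hv.2.1)]
    linarith [hmin v hv.2]
  calc ∫ v in priceLevel μ p c a j, p v ∂μ
      ≤ 2 * levelFloor c a j / (norm1 xj / (1 + ε)) * (brev μ).toReal :=
        setIntegral_le_div_mul_brev (measurableSet_priceLevel hpm j) hpi.integrableOn
          (by positivity) (by positivity) hprice hbundle hb
    _ = 4 * (1 + ε) * (brev μ).toReal * (levelFloor c a j / 2 / norm1 xj) := by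
        field_simp
        ring

end PriceLevels

lemma le_gapS {k : ℕ} {S : Set ℕ} {X Q : ℕ → V k} {i : ℕ} {b : ℝ} (hi : 0 < i)
    (h : ∀ j, j ∈ S ∨ j = 0 → j < i → b ≤ dot (Q i - Q j) (X i)) : b ≤ gapS S X Q i := by
  refine le_csInf ⟨_, 0, Or.inr rfl, hi, rfl⟩ ?_
  rintro y ⟨j, hj, hji, rfl⟩
  exact h j hj hji

lemma levelFloor_div_two_le_gapS {k : ℕ} {q : V k → V k} {p : V k → ℝ} {c : ℝ} {a : ℕ}
    (hc : 0 ≤ c)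
    (hIC : ∀ v w : V k, (∀ t, 0 ≤ v t) → (∀ t, 0 ≤ w t) →
      dot v (q w) - p w ≤ dot v (q v) - p v)
    (hIR : ∀ v : V k, (∀ t, 0 ≤ v t) → 0 ≤ dot v (q v) - p v)
    {S : Set ℕ} {x : ℕ → V k} (hS : ∀ j ∈ S, 1 ≤ j ∧ (∀ t, 0 ≤ x j t) ∧ p (x j) ∈ Ico' c a j)
    {j : ℕ} (hj : j ∈ S) :
    levelFloor c a j / 2 ≤ gapS S x (fun n => if n = 0 then 0 else q (x n)) j := by
  obtain ⟨hj1, hxj, hpj⟩ := hS j hj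
  rw [Ico'_eq] at hpj
  have hfloor := levelFloor_nonneg hc a j
  refine le_gapS hj1 fun i hi hij => ?_
  simp only [Nat.pos_iff_ne_zero.1 hj1, if_false]
  rcases hi with hiS | rfl
  · obtain ⟨hi1, hxi, hpi⟩ := hS i hiS
    rw [Ico'_eq] at hpi
    have h4 := four_mul_levelFloor_le hc a hi1 hij
    have hic := hIC (x j) (x i) hxj hxi
    simp only [Nat.pos_iff_ne_zero.1 hi1, if_false]
    rw [dot_sub_left, dot_comm (q (x j)), dot_comm (q (x i))]
    linarith [hpi.2, hpj.1]
  · have hir := hIR (x j) hxj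
    simp only [if_true, sub_zero]
    rw [dot_comm]
    linarith [hpj.1]

theorem stmt7 (k : ℕ) (μ : Measure (V k)) [IsProbabilityMeasure μ]
    (hsupp : msupport μ ⊆ {v | ∀ t, 0 ≤ v t})
    (hb0 : 0 < brev μ)
    (c ε : ℝ) (hc : 0 < c) (hε : 0 < ε) (a : ℕ)
    (q : V k → V k) (p : V k → ℝ)
    (hq : ∀ v t, q v t ∈ Set.Icc (0:ℝ) 1)
    (hIC : ∀ v w : V k, (∀ t, 0 ≤ v t) → (∀ t, 0 ≤ w t) →
      dot v (q w) - p w ≤ dot v (q v) - p v)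
    (hIR : ∀ v : V k, (∀ t, 0 ≤ v t) → 0 ≤ dot v (q v) - p v)
    (hpmeas : Measurable p) (hpint : Integrable p μ)
    -- dyadic prices on the support
    (hdyadic : ∀ v ∈ msupport μ, p v = 0 ∨ ∃ j : ℕ, 1 ≤ j ∧ p v ∈ Ico' c a j)
    -- the chosen representatives x_j ∈ B_j, of nearly minimal ℓ¹ norm
    (x : ℕ → V k)
    (hx : ∀ j : ℕ, 1 ≤ j → (Bset μ p c a j).Nonempty →
      x j ∈ Bset μ p c a j ∧ ∀ v ∈ Bset μ p c a j, norm1 (x j) ≤ (1 + ε) * norm1 v) :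
    -- conclusion: 4(1+ε)·BRev(D)·MenuGap(X,Q) ≥ Rev(D,M)
    (((∫ v, p v ∂μ : ℝ)) : EReal) ≤
      ((4 : ℝ) : EReal) * (((1 + ε : ℝ)) : EReal) * ((brev μ : ℝ≥0∞) : EReal) *
        menuGapS {j | 1 ≤ j ∧ (Bset μ p c a j).Nonempty} x
          (fun j => if j = 0 then (0 : V k) else q (x j)) := by
  set S := {j | 1 ≤ j ∧ (Bset μ p c a j).Nonempty}
  set g := S.indicator fun i => gapS S x (fun j => if j = 0 then 0 else q (x j)) i / norm1 (x i)
    with hg_def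
  have hxS : ∀ j ∈ S, 1 ≤ j ∧ (∀ t, 0 ≤ x j t) ∧ p (x j) ∈ Ico' c a j := fun j hj =>
    ⟨hj.1, hsupp (hx j hj.1 hj.2).1.1, (hx j hj.1 hj.2).1.2⟩
  have hnorm : ∀ j ∈ S, 0 < norm1 (x j) := fun j hj =>
    (levelFloor_pos hc a j).trans_le <| levelFloor_le_norm1 (hxS j hj).2.1 (fun t => (hq _ t).2)
      (hIR _ (hxS j hj).2.1) (hxS j hj).2.2
  have hg : ∀ j ∈ S, levelFloor c a j / 2 / norm1 (x j) ≤ g j := fun j hj => by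
    rw [hg_def, Set.indicator_of_mem hj]
    exact div_le_div_of_nonneg_right (levelFloor_div_two_le_gapS hc.le hIC hIR hxS hj)
      (hnorm j hj).le
  have hg_pos : ∀ j ∈ S, 0 < g j := fun j hj =>
    (div_pos (half_pos (levelFloor_pos hc a j)) (hnorm j hj)).trans_le (hg j hj)
  have hg_nonneg : ∀ j, 0 ≤ g j :=
    Set.indicator_nonneg fun j hj => (hg_pos j hj).le.trans_eq (Set.indicator_of_mem hj _)
  have hF := hasSum_integral_priceLevel hc.le hpmeas hpint hdyadic
  rcases eq_or_ne (brev μ) ⊤ with htop | hfin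
  · rw [htop, EReal.coe_ennreal_top, ← EReal.coe_mul, EReal.coe_mul_top_of_pos (by positivity)]
    exact coe_le_top_mul_eseries hF hg_nonneg fun j hj0 =>
      (integral_priceLevel_eq_zero fun hj => (hg_pos j hj).ne' hj0).le
  · have hB : 0 < (brev μ).toReal := ENNReal.toReal_pos hb0.ne' hfin
    rw [← EReal.coe_ennreal_toReal hfin, ← EReal.coe_mul, ← EReal.coe_mul]
    refine coe_le_mul_eseries hF (by positivity) hg_nonneg fun j => ?_
    by_cases hj : j ∈ S
    · exact (integral_priceLevel_le hsupp hc.le (by linarith) hpmeas hpint (hnorm j hj)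
        (hx j hj.1 hj.2).2 hfin).trans (mul_le_mul_of_nonneg_left (hg j hj) (by positivity))
    · rw [integral_priceLevel_eq_zero hj]
      exact mul_nonneg (by positivity) (hg_nonneg j)

end Stmt7
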